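/- If G and H are connected graphs of orders n, m ≥ 3 respectively, then max{Δ(G)+m, Δ(H)+1} ≤ χ'_D(G∘H) ≤ max{χ'_D(G), χ'_D(H)} + m. -/

import Mathlib

/-!
Lower bound: a proper labeling of `G ∘ H` uses distinct labels on the `Δ(G) + m` edges at a
vertex of maximum degree of `G`, and on the `Δ(H) + 1` edges at a vertex of maximum degree in a
copy of `H`.

Upper bound: with `k = max χ'_D(G) χ'_D(H)`, label the copy of `G` by a distinguishing proper
labeling of `G` with labels `< χ'_D(G)`, every copy of `H` by one proper labeling of `H` with
labels `< χ'_D(H)`, and the `m` edges from a vertex of `G` to its copy of `H` by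
`k, …, k + m - 1`. Vertices of `G` are then the only vertices whose incident edges carry at least
two labels `≥ k`, so an automorphism preserving the labeling fixes `G` setwise, hence pointwise;
the pendant labels then pin down every vertex of every copy of `H`.

Connectivity and `≥ 3` vertices make `χ'_D` attained (an injective labeling is then
distinguishing); otherwise the `sInf` defining it could be that of the empty set, `0`.
-/

open SimpleGraph

/-- Two edges (as unordered pairs) are adjacent if they are distinct and share an endpoint. -/
def EdgesAdj {V : Type*} (e f : Sym2 V) : Prop := e ≠ f ∧ ∃ v, v ∈ e ∧ v ∈ f

/-- A proper edge labeling: adjacent edges of `G` receive different labels. -/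
def IsProperEdgeLabeling {V : Type*} (G : SimpleGraph V) (c : Sym2 V → ℕ) : Prop :=
  ∀ e ∈ G.edgeSet, ∀ f ∈ G.edgeSet, EdgesAdj e f → c e ≠ c f

/-- An automorphism `φ` of `G` preserves the edge labeling `c`. -/
def PreservesEdgeLabeling {V : Type*} (G : SimpleGraph V) (φ : G ≃g G) (c : Sym2 V → ℕ) : Prop :=
  ∀ e ∈ G.edgeSet, c (Sym2.map φ e) = c e

/-- A distinguishing edge labeling: only the identity automorphism preserves it. -/
def IsDistinguishingEdgeLabeling {V : Type*} (G : SimpleGraph V) (c : Sym2 V → ℕ) : Prop :=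
  ∀ φ : G ≃g G, PreservesEdgeLabeling G φ c → ∀ v, φ v = v

/-- The chromatic index `χ'(G)`. -/
noncomputable def chromIndex {V : Type*} (G : SimpleGraph V) : ℕ :=
  sInf {d | ∃ c : Sym2 V → ℕ, IsProperEdgeLabeling G c ∧ ∀ e ∈ G.edgeSet, c e < d}

/-- The distinguishing index `D'(G)`. -/
noncomputable def distIndex {V : Type*} (G : SimpleGraph V) : ℕ :=
  sInf {d | ∃ c : Sym2 V → ℕ, IsDistinguishingEdgeLabeling G c ∧ ∀ e ∈ G.edgeSet, c e < d}

/-- The distinguishing chromatic index `χ'_D(G)`. -/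
noncomputable def distChromIndex {V : Type*} (G : SimpleGraph V) : ℕ :=
  sInf {d | ∃ c : Sym2 V → ℕ, IsProperEdgeLabeling G c ∧ IsDistinguishingEdgeLabeling G c ∧
      ∀ e ∈ G.edgeSet, c e < d}

/-- The corona product `G ∘ H`: one copy of `G` and, for each vertex `i` of `G`, a copy of `H`
whose vertices are all joined to `i`. -/
def coronaProd {α β : Type*} (G : SimpleGraph α) (H : SimpleGraph β) :
    SimpleGraph (α ⊕ α × β) where
  Adj x y :=
    Sum.elim (fun v => Sum.elim (fun w => G.Adj v w) (fun p => v = p.1) y)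
             (fun p => Sum.elim (fun w => p.1 = w) (fun q => p.1 = q.1 ∧ H.Adj p.2 q.2) y) x
  symm := by constructor; rintro (v|p) (w|q) h
             · exact h.symm
             · exact h.symm
             · exact h.symm
             · exact ⟨h.1.symm, h.2.symm⟩
  loopless := by constructor; rintro (v|p) h
                 · exact G.loopless.irrefl v h
                 · exact H.loopless.irrefl p.2 h.2

namespace SimpleGraph

variable {V : Type*} {G : SimpleGraph V} {c : Sym2 V → ℕ}

lemma isProperEdgeLabeling_iff :
    IsProperEdgeLabeling G c ↔
      ∀ x a b, G.Adj x a → G.Adj x b → a ≠ b → c s(x, a) ≠ c s(x, b) := by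
  refine ⟨fun h x a b ha hb hab => h _ ha _ hb ⟨?_, x, by simp, by simp⟩, ?_⟩
  · simpa [Sym2.eq_iff, hab] using fun h _ => G.ne_of_adj hb h
  · rintro h e he f hf ⟨hef, v, hve, hvf⟩
    obtain ⟨a, rfl⟩ := Sym2.mem_iff_exists.mp hve
    obtain ⟨b, rfl⟩ := Sym2.mem_iff_exists.mp hvf
    exact h v a b he hf (by rintro rfl; exact hef rfl)

lemma card_le_of_isProperEdgeLabeling {ι : Type*} [Fintype ι] {d : ℕ}
    (hc : IsProperEdgeLabeling G c) (hd : ∀ e ∈ G.edgeSet, c e < d) {x : V} {f : ι → V}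
    (hf : Function.Injective f) (hadj : ∀ i, G.Adj x (f i)) : Fintype.card ι ≤ d := by
  have hinj : Function.Injective fun i => (⟨c s(x, f i), hd _ (hadj i)⟩ : Fin d) :=
    fun i j hij => by_contra fun hne =>
      isProperEdgeLabeling_iff.1 hc x _ _ (hadj i) (hadj j) (hf.ne hne) (congrArg Fin.val hij)
  simpa using Fintype.card_le_of_injective _ hinj

lemma PreservesEdgeLabeling.label_eq {φ : G ≃g G} (hφ : PreservesEdgeLabeling G φ c)
    {x y : V} (hxy : G.Adj x y) : c s(φ x, φ y) = c s(x, y) :=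
  hφ s(x, y) hxy

lemma PreservesEdgeLabeling.symm {φ : G ≃g G} (hφ : PreservesEdgeLabeling G φ c) :
    PreservesEdgeLabeling G φ.symm c := by
  intro e he
  induction e using Sym2.ind with
  | _ x y => simpa using (hφ.label_eq (φ.symm.map_adj_iff.2 he)).symm

lemma eq_or_eq_of_map_edge_eq {φ : G ≃g G} {a b : V} (h : Sym2.map φ s(a, b) = s(a, b)) :
    φ a = a ∨ φ a = b := by
  rw [Sym2.map_mk, Sym2.eq_iff] at h
  tauto

/-- If `φ` swapped the ends of an edge `xw`, then for an edge `ab` leaving `{x, w}` with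
`a ∈ {x, w}`, `φ a` would lie both in `{a, b}` and in `{x, w} \ {a}`. -/
lemma Connected.apply_eq_self_of_map_edge_eq [Fintype V] (hG : G.Connected)
    (hcard : 3 ≤ Fintype.card V) (φ : G ≃g G)
    (hfix : ∀ e ∈ G.edgeSet, Sym2.map φ e = e) (x : V) : φ x = x := by
  classical
  obtain ⟨y, hyx⟩ := Fintype.exists_ne_of_one_lt_card (by omega) x
  obtain ⟨w, hxw⟩ : ∃ w, G.Adj x w := by
    obtain ⟨p⟩ := hG.preconnected x y
    cases p with
    | nil => exact absurd rfl hyx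
    | cons h _ => exact ⟨_, h⟩
  have hend : ∀ a b, G.Adj a b → φ a = a ∨ φ a = b := fun a b hab =>
    eq_or_eq_of_map_edge_eq (hfix _ hab)
  refine (hend x w hxw).resolve_right fun hφx => ?_
  have hφw : φ w = x := (hend w x hxw.symm).resolve_left fun h =>
    G.ne_of_adj hxw (φ.injective (hφx.trans h.symm))
  obtain ⟨u, -, hu⟩ := Finset.exists_mem_notMem_of_card_lt_card
    (s := {x, w}) (t := Finset.univ) ((Finset.card_le_two).trans_lt (by simp; omega))
  obtain ⟨d, -, hd, hdu⟩ := (hG.preconnected x u).some.exists_boundary_dart {x, w} (by simp)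
    (by simpa using hu)
  have := hend d.fst d.snd d.adj
  simp only [Set.mem_insert_iff, Set.mem_singleton_iff] at hd hdu
  rcases hd with hd | hd <;> rw [hd] at this <;> grind [G.ne_of_adj hxw]

lemma isDistinguishingEdgeLabeling_of_injective [Fintype V] (hG : G.Connected)
    (hcard : 3 ≤ Fintype.card V) (hc : Function.Injective c) :
    IsDistinguishingEdgeLabeling G c :=
  fun φ hφ => hG.apply_eq_self_of_map_edge_eq hcard φ fun e he => hc (hφ e he)

lemma distChromIndex_le {d : ℕ} (hp : IsProperEdgeLabeling G c)
    (hd : IsDistinguishingEdgeLabeling G c) (hb : ∀ e ∈ G.edgeSet, c e < d) :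
    distChromIndex G ≤ d :=
  Nat.sInf_le ⟨c, hp, hd, hb⟩

lemma exists_labeling_lt_distChromIndex {d : ℕ}
    (h : ∃ c : Sym2 V → ℕ, IsProperEdgeLabeling G c ∧ IsDistinguishingEdgeLabeling G c ∧
      ∀ e ∈ G.edgeSet, c e < d) :
    ∃ c : Sym2 V → ℕ, IsProperEdgeLabeling G c ∧ IsDistinguishingEdgeLabeling G c ∧
      ∀ e ∈ G.edgeSet, c e < distChromIndex G :=
  Nat.sInf_mem (s := {d | ∃ c : Sym2 V → ℕ, IsProperEdgeLabeling G c ∧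
    IsDistinguishingEdgeLabeling G c ∧ ∀ e ∈ G.edgeSet, c e < d}) ⟨d, h⟩

lemma Connected.exists_labeling_lt_distChromIndex [Fintype V] (hG : G.Connected)
    (hcard : 3 ≤ Fintype.card V) :
    ∃ c : Sym2 V → ℕ, IsProperEdgeLabeling G c ∧ IsDistinguishingEdgeLabeling G c ∧
      ∀ e ∈ G.edgeSet, c e < distChromIndex G := by
  classical
  let c : Sym2 V → ℕ := fun e => Fintype.equivFin (Sym2 V) e
  have hc : Function.Injective c := fun e f h => (Fintype.equivFin _).injective (Fin.ext h)
  exact SimpleGraph.exists_labeling_lt_distChromIndex ⟨c, fun e _ f _ hef h => hef.1 (hc h),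
    isDistinguishingEdgeLabeling_of_injective hG hcard hc, fun e _ => (Fintype.equivFin _ e).isLt⟩

end SimpleGraph

section Corona

open Sum

variable {α β : Type*} {G : SimpleGraph α} {H : SimpleGraph β}

@[simp] lemma coronaProd_adj_inl_inl {v w : α} :
    (coronaProd G H).Adj (inl v) (inl w) ↔ G.Adj v w := Iff.rfl

@[simp] lemma coronaProd_adj_inl_inr {v : α} {p : α × β} :
    (coronaProd G H).Adj (inl v) (inr p) ↔ v = p.1 := Iff.rfl

@[simp] lemma coronaProd_adj_inr_inl {p : α × β} {w : α} :
    (coronaProd G H).Adj (inr p) (inl w) ↔ p.1 = w := Iff.rfl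

@[simp] lemma coronaProd_adj_inr_inr {p q : α × β} :
    (coronaProd G H).Adj (inr p) (inr q) ↔ p.1 = q.1 ∧ H.Adj p.2 q.2 := Iff.rfl

def coronaLabel (cG : Sym2 α → ℕ) (cH : Sym2 β → ℕ) (k : ℕ) (ι : β → ℕ) :
    Sym2 (α ⊕ α × β) → ℕ :=
  Sym2.lift ⟨fun x y => match x, y with
    | inl v, inl w => cG s(v, w)
    | inl _, inr p | inr p, inl _ => k + ι p.2
    | inr p, inr q => cH s(p.2, q.2),
    by rintro (v | p) (w | q) <;> simp [Sym2.eq_swap]⟩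

variable {cG : Sym2 α → ℕ} {cH : Sym2 β → ℕ} {k : ℕ} {ι : β → ℕ}

@[simp] lemma coronaLabel_inl_inl (v w : α) :
    coronaLabel cG cH k ι s(inl v, inl w) = cG s(v, w) := rfl

@[simp] lemma coronaLabel_inl_inr (v : α) (p : α × β) :
    coronaLabel cG cH k ι s(inl v, inr p) = k + ι p.2 := rfl

@[simp] lemma coronaLabel_inr_inl (p : α × β) (w : α) :
    coronaLabel cG cH k ι s(inr p, inl w) = k + ι p.2 := rfl

@[simp] lemma coronaLabel_inr_inr (p q : α × β) :
    coronaLabel cG cH k ι s(inr p, inr q) = cH s(p.2, q.2) := rfl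

lemma coronaLabel_isProperEdgeLabeling (hG : IsProperEdgeLabeling G cG)
    (hH : IsProperEdgeLabeling H cH) (hGk : ∀ e ∈ G.edgeSet, cG e < k)
    (hHk : ∀ e ∈ H.edgeSet, cH e < k) (hι : Function.Injective ι) :
    IsProperEdgeLabeling (coronaProd G H) (coronaLabel cG cH k ι) := by
  rw [isProperEdgeLabeling_iff] at hG hH ⊢
  rintro (v | p) (a | ⟨v', a⟩) (b | ⟨v'', b⟩) hxa hxb hab <;>
    simp only [coronaProd_adj_inl_inl, coronaProd_adj_inl_inr, coronaProd_adj_inr_inl,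
      coronaProd_adj_inr_inr, coronaLabel_inl_inl, coronaLabel_inl_inr, coronaLabel_inr_inl,
      coronaLabel_inr_inr] at hxa hxb ⊢
  · exact hG v a b hxa hxb (by rintro rfl; exact hab rfl)
  · have := hGk s(v, a) hxa; omega
  · have := hGk s(v, b) hxb; omega
  · subst hxa hxb
    exact fun h => hab (by rw [hι (Nat.add_left_cancel h)])
  · exact absurd (hxa.symm.trans hxb ▸ rfl) hab
  · have := hHk s(p.2, b) hxb.2; omega
  · have := hHk s(p.2, a) hxa.2; omega
  · exact hH p.2 a b hxa.2 hxb.2 (by rintro rfl; exact hab (by rw [← hxa.1, ← hxb.1]))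

lemma coronaLabel_lt {m : ℕ} (hGk : ∀ e ∈ G.edgeSet, cG e < k)
    (hHk : ∀ e ∈ H.edgeSet, cH e < k) (hιm : ∀ b, ι b < m) :
    ∀ e ∈ (coronaProd G H).edgeSet, coronaLabel cG cH k ι e < k + m := by
  intro e he
  induction e using Sym2.ind with
  | _ x y =>
    rcases x with v | p <;> rcases y with w | q <;> simp only [mem_edgeSet,
      coronaProd_adj_inl_inl, coronaProd_adj_inr_inr, coronaLabel_inl_inl, coronaLabel_inl_inr,
      coronaLabel_inr_inl, coronaLabel_inr_inr] at he ⊢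
    · have := hGk s(v, w) he; omega
    · have := hιm q.2; omega
    · have := hιm p.2; omega
    · have := hHk s(p.2, q.2) he.2; omega

lemma exists_apply_inl_eq_inl_of_preservesEdgeLabeling [Nontrivial β]
    (hHk : ∀ e ∈ H.edgeSet, cH e < k) (hι : Function.Injective ι)
    {ψ : coronaProd G H ≃g coronaProd G H}
    (hψ : PreservesEdgeLabeling _ ψ (coronaLabel cG cH k ι)) (v : α) :
    ∃ w, ψ (inl v) = inl w := by
  rcases hq : ψ (inl v) with w | p
  · exact ⟨w, rfl⟩
  · have hconst : ∀ b, ι b = ι p.2 := by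
      intro b
      have hadj : (coronaProd G H).Adj (inl v) (inr (v, b)) := rfl
      have hlabel := hψ.label_eq hadj
      have hadj' := ψ.map_adj_iff.2 hadj
      rcases hy : ψ (inr (v, b)) with w | q <;> rw [hq, hy] at hlabel hadj'
      · simp only [coronaLabel_inr_inl, coronaLabel_inl_inr] at hlabel
        omega
      · simp only [coronaLabel_inr_inr, coronaLabel_inl_inr] at hlabel
        have := hHk s(p.2, q.2) hadj'.2
        omega
    obtain ⟨b₁, b₂, hb⟩ := exists_pair_ne β
    exact absurd (hι ((hconst b₁).trans (hconst b₂).symm)) hb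

lemma apply_inl_eq_self_of_preservesEdgeLabeling [Nontrivial β]
    (hGd : IsDistinguishingEdgeLabeling G cG) (hHk : ∀ e ∈ H.edgeSet, cH e < k)
    (hι : Function.Injective ι) {φ : coronaProd G H ≃g coronaProd G H}
    (hφ : PreservesEdgeLabeling _ φ (coronaLabel cG cH k ι)) (v : α) : φ (inl v) = inl v := by
  choose g hg using exists_apply_inl_eq_inl_of_preservesEdgeLabeling hHk hι hφ
  have hg_inj : Function.Injective g := fun a b h =>
    inl_injective (φ.injective (by rw [hg, hg, h]))
  have hg_surj : Function.Surjective g := fun w => by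
    obtain ⟨v, hv⟩ := exists_apply_inl_eq_inl_of_preservesEdgeLabeling hHk hι hφ.symm w
    exact ⟨v, inl_injective (by rw [← hg, ← hv, RelIso.apply_symm_apply])⟩
  let gIso : G ≃g G :=
    ⟨Equiv.ofBijective g ⟨hg_inj, hg_surj⟩, fun {a b} => by
      show G.Adj (g a) (g b) ↔ G.Adj a b
      simpa [hg] using φ.map_adj_iff (v := inl a) (w := inl b)⟩
  have hpres : PreservesEdgeLabeling G gIso cG := by
    intro e he
    induction e using Sym2.ind with
    | _ a b =>
      show cG s(g a, g b) = cG s(a, b)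
      simpa [hg] using hφ.label_eq (coronaProd_adj_inl_inl.2 he)
  exact (hg v).trans (congrArg inl (hGd gIso hpres v))

lemma coronaLabel_isDistinguishingEdgeLabeling [Nontrivial β]
    (hGd : IsDistinguishingEdgeLabeling G cG) (hHk : ∀ e ∈ H.edgeSet, cH e < k)
    (hι : Function.Injective ι) :
    IsDistinguishingEdgeLabeling (coronaProd G H) (coronaLabel cG cH k ι) := by
  intro φ hφ x
  have hinl := apply_inl_eq_self_of_preservesEdgeLabeling hGd hHk hι hφ
  rcases x with v | p
  · exact hinl v
  rcases hq : φ (inr p) with w | q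
  · exact absurd (φ.injective (hq.trans (hinl w).symm)) inr_ne_inl
  · have hadj : (coronaProd G H).Adj (inl p.1) (inr p) := rfl
    have hlabel := hφ.label_eq hadj
    have hadj' := φ.map_adj_iff.2 hadj
    rw [hinl, hq] at hlabel hadj'
    simp only [coronaLabel_inl_inr, Nat.add_left_cancel_iff] at hlabel
    exact congrArg inr (Prod.ext hadj'.symm (hι hlabel))

variable {c : Sym2 (α ⊕ α × β) → ℕ} {d : ℕ}

lemma maxDegree_add_card_le_of_isProperEdgeLabeling [Fintype α] [Fintype β] [DecidableRel G.Adj]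
    [Nonempty α] (hc : IsProperEdgeLabeling (coronaProd G H) c)
    (hd : ∀ e ∈ (coronaProd G H).edgeSet, c e < d) :
    G.maxDegree + Fintype.card β ≤ d := by
  obtain ⟨v, hv⟩ := G.exists_maximal_degree_vertex
  have := card_le_of_isProperEdgeLabeling hc hd (x := inl v)
    (f := Sum.elim (fun w : G.neighborSet v => inl w.1) fun b => inr (v, b))
    (by rintro (⟨w, hw⟩ | b) (⟨w', hw'⟩ | b') h <;> simp_all)
    (by rintro (⟨w, hw⟩ | b); exacts [hw, rfl])
  rwa [Fintype.card_sum, card_neighborSet_eq_degree, ← hv] at this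

lemma maxDegree_add_one_le_of_isProperEdgeLabeling [Fintype β] [DecidableRel H.Adj] [Nonempty α]
    [Nonempty β] (hc : IsProperEdgeLabeling (coronaProd G H) c)
    (hd : ∀ e ∈ (coronaProd G H).edgeSet, c e < d) :
    H.maxDegree + 1 ≤ d := by
  obtain ⟨b, hb⟩ := H.exists_maximal_degree_vertex
  obtain ⟨v⟩ := ‹Nonempty α›
  have := card_le_of_isProperEdgeLabeling hc hd (x := inr (v, b))
    (f := Sum.elim (fun b' : H.neighborSet b => inr (v, b'.1)) fun _ : Unit => inl v)
    (by rintro (⟨b₁, hb₁⟩ | ⟨⟩) (⟨b₂, hb₂⟩ | ⟨⟩) h <;> simp_all)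
    (by rintro (⟨b', hb'⟩ | -); exacts [⟨rfl, hb'⟩, rfl])
  rwa [Fintype.card_sum, card_neighborSet_eq_degree, ← hb, Fintype.card_unit] at this

end Corona

theorem stmt18 {α β : Type*} [Fintype α] [Fintype β]
    (G : SimpleGraph α) (H : SimpleGraph β) [DecidableRel G.Adj] [DecidableRel H.Adj]
    (hG : G.Connected) (hH : H.Connected)
    (hn : 3 ≤ Fintype.card α) (hm : 3 ≤ Fintype.card β) :
    max (G.maxDegree + Fintype.card β) (H.maxDegree + 1) ≤ distChromIndex (coronaProd G H) ∧
    distChromIndex (coronaProd G H) ≤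
      max (distChromIndex G) (distChromIndex H) + Fintype.card β := by
  have : Nonempty α := Fintype.card_pos_iff.1 (by omega)
  have : Nontrivial β := Fintype.one_lt_card_iff_nontrivial.1 (by omega)
  obtain ⟨cG, hGp, hGd, hGb⟩ := hG.exists_labeling_lt_distChromIndex hn
  obtain ⟨cH, hHp, -, hHb⟩ := hH.exists_labeling_lt_distChromIndex hm
  set k := max (distChromIndex G) (distChromIndex H)
  have hGk : ∀ e ∈ G.edgeSet, cG e < k := fun e he => (hGb e he).trans_le (le_max_left _ _)
  have hHk : ∀ e ∈ H.edgeSet, cH e < k := fun e he => (hHb e he).trans_le (le_max_right _ _)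
  let ι : β → ℕ := fun b => Fintype.equivFin β b
  have hι : Function.Injective ι := fun a b h => (Fintype.equivFin β).injective (Fin.ext h)
  have hp := coronaLabel_isProperEdgeLabeling hGp hHp hGk hHk hι
  have hd := coronaLabel_isDistinguishingEdgeLabeling hGd hHk hι
  have hb := coronaLabel_lt hGk hHk fun b => (Fintype.equivFin β b).isLt
  obtain ⟨c, hcp, -, hcb⟩ := exists_labeling_lt_distChromIndex ⟨_, hp, hd, hb⟩
  exact ⟨max_le (maxDegree_add_card_le_of_isProperEdgeLabeling hcp hcb)
    (maxDegree_add_one_le_of_isProperEdgeLabeling hcp hcb), distChromIndex_le hp hd hb⟩
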